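/- arXiv:2501.07958 — 5 statements merged into one kernel-verified Lean document; each statement's English description precedes it below -/
import Mathlib

section
/- Let f be a map from a finite domain D_f into Finset a such that f v = V v for every v ∈ D_f. If D_f is nonempty (equivalently, α f ≥ 0 in WithBot ℕ), then α (next f) < α f. -/
/-- A map with finite domain `dom`, whose values are given by `toFun`. -/
structure FMap (α : Type*) (β : Type*) where
  dom : Finset α
  toFun : α → β

/-- The map `next f`, with domain `⋃ v ∈ D_f, f v` and values `V`. -/
def FMap.next {α : Type*} [DecidableEq α] (V : α → Finset α)
    (f : FMap α (Finset α)) : FMap α (Finset α) :=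
  ⟨f.dom.biUnion f.toFun, V⟩

/-- `α f`: the supremum of the potential `γ` over the domain of `f` (⊥ for the empty domain). -/
def FMap.alpha {α β : Type*} (γ : α → ℕ) (f : FMap α β) : WithBot ℕ :=
  f.dom.sup (fun v => (γ v : WithBot ℕ))

namespace FMap

theorem alpha_lt_alpha_of_forall_exists_lt {α β β' : Type*} (γ : α → ℕ)
    {f : FMap α β} {g : FMap α β'} (hf : ⊥ < alpha γ f)
    (h : ∀ y ∈ g.dom, ∃ v ∈ f.dom, γ y < γ v) : alpha γ g < alpha γ f := by
  refine (Finset.sup_lt_iff hf).2 fun y hy => ?_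
  obtain ⟨v, hv, hyv⟩ := h y hy
  calc (γ y : WithBot ℕ) < γ v := WithBot.coe_lt_coe.2 hyv
    _ ≤ alpha γ f := Finset.le_sup (f := fun v => (γ v : WithBot ℕ)) hv

end FMap

/-- **Lemma 2.** Let `f` be a map from a finite domain `D_f` into `Finset α`
such that `f v = V v` for every `v ∈ D_f`.  If `D_f` is nonempty (equivalently,
`α f ≥ 0` in `WithBot ℕ`), then `α (next f) < α f`. -/
theorem alpha_next_lt_alpha {α : Type*} [DecidableEq α]
    (V : α → Finset α) (γ : α → ℕ)
    (hγ : ∀ x, ∀ y ∈ V x, γ y < γ x)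
    (f : FMap α (Finset α))
    (hf : ∀ v ∈ f.dom, f.toFun v = V v)
    (hpos : (0 : WithBot ℕ) ≤ FMap.alpha γ f) :
    FMap.alpha γ (FMap.next V f) < FMap.alpha γ f := by
  refine FMap.alpha_lt_alpha_of_forall_exists_lt γ ((WithBot.bot_lt_coe 0).trans_le hpos)
    fun y hy => ?_
  obtain ⟨v, hv, hyv⟩ := Finset.mem_biUnion.1 hy
  exact ⟨v, hv, hγ v y (hf v hv ▸ hyv)⟩
end

section
/- Let f be a map from a finite domain D_f into Finset a such that f v = V v for every v ∈ D_f. Then α (next f) = α f if and only if α f = ⊥ (that is, if and only if D_f = ∅). -/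
namespace FMap

theorem alpha_eq_bot_iff {α β : Type*} (γ : α → ℕ) (f : FMap α β) :
    f.alpha γ = ⊥ ↔ f.dom = ∅ := by
  simp [alpha, Finset.sup_eq_bot_iff, Finset.eq_empty_iff_forall_notMem]

theorem le_alpha {α β : Type*} (γ : α → ℕ) (f : FMap α β) {v : α} (hv : v ∈ f.dom) :
    (γ v : WithBot ℕ) ≤ f.alpha γ :=
  Finset.le_sup (f := fun v => (γ v : WithBot ℕ)) hv

theorem next_dom_eq_empty {α : Type*} [DecidableEq α] (V : α → Finset α)
    (f : FMap α (Finset α)) (hf : f.dom = ∅) : (f.next V).dom = ∅ := by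
  simp [next, hf]

theorem alpha_next_lt_alpha {α : Type*} [DecidableEq α] (V : α → Finset α) (γ : α → ℕ)
    (f : FMap α (Finset α)) (hdesc : ∀ v ∈ f.dom, ∀ y ∈ f.toFun v, γ y < γ v)
    (hne : f.dom.Nonempty) : (f.next V).alpha γ < f.alpha γ := by
  have hbot : ⊥ < f.alpha γ := by
    rw [bot_lt_iff_ne_bot, Ne, alpha_eq_bot_iff]
    exact hne.ne_empty
  rw [alpha, Finset.sup_lt_iff hbot]
  intro y hy
  obtain ⟨v, hv, hyv⟩ := Finset.mem_biUnion.mp hy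
  calc (γ y : WithBot ℕ) < γ v := WithBot.coe_lt_coe.mpr (hdesc v hv y hyv)
    _ ≤ f.alpha γ := le_alpha γ f hv

end FMap

/-- **Corollary to Lemma 2.** Let `f` be a map from a finite domain `D_f`
into `Finset α` such that `f v = V v` for every `v ∈ D_f`.  Then `α (next f) = α f`
if and only if `α f = ⊥` (that is, if and only if `D_f = ∅`). -/
theorem alpha_next_eq_alpha_iff {α : Type*} [DecidableEq α]
    (V : α → Finset α) (γ : α → ℕ)
    (hγ : ∀ x, ∀ y ∈ V x, γ y < γ x)
    (f : FMap α (Finset α))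
    (hf : ∀ v ∈ f.dom, f.toFun v = V v) :
    (FMap.alpha γ (FMap.next V f) = FMap.alpha γ f ↔ FMap.alpha γ f = ⊥) ∧
      (FMap.alpha γ f = ⊥ ↔ f.dom = ∅) := by
  refine ⟨⟨fun heq => ?_, fun hbot => ?_⟩, FMap.alpha_eq_bot_iff γ f⟩
  · rw [FMap.alpha_eq_bot_iff, ← Finset.not_nonempty_iff_eq_empty]
    intro hne
    have hdesc : ∀ v ∈ f.dom, ∀ y ∈ f.toFun v, γ y < γ v := fun v hv y hy =>
      hγ v y (hf v hv ▸ hy)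
    exact (FMap.alpha_next_lt_alpha V γ f hdesc hne).ne heq
  · have hdom := (FMap.alpha_eq_bot_iff γ f).mp hbot
    rw [hbot, FMap.alpha_eq_bot_iff]
    exact FMap.next_dom_eq_empty V f hdom
end

section
/- Let f be a map from a finite domain D_f into Finset a such that f v = V v for every v ∈ D_f, and let g = R_m f. Then for every x in the domain of g, g x = R x. -/
/-- The map `G_m f m`, with domain `D_f ∪ D_m`. -/
def FMap.Gm {α β σ : Type*} [DecidableEq α] (P : α → Prop) [DecidablePred P] (e : β)
    (F : Finset α → (α → β) → σ) (G : α → σ → β)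
    (f : FMap α (Finset α)) (m : FMap α β) : FMap α β :=
  ⟨f.dom ∪ m.dom, fun x =>
    if x ∈ m.dom then m.toFun x
    else if P x then e
    else G x (F (f.toFun x) m.toFun)⟩

/-- Auxiliary form of `R_m` for maps whose values are given by `V`; the recursion
terminates because the potential strictly decreases along iterated domains. -/
def RmAux {α β σ : Type*} [DecidableEq α] (P : α → Prop) [DecidablePred P] (e : β)
    (F : Finset α → (α → β) → σ) (G : α → σ → β) (V : α → Finset α)
    (γ : α → ℕ) (hγ : ∀ x, ∀ y ∈ V x, γ y < γ x) (D : Finset α) : FMap α β :=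
  if h : ∀ x ∈ D, P x then ⟨D, fun _ => e⟩
  else FMap.Gm P e F G ⟨D, V⟩ (RmAux P e F G V γ hγ (D.biUnion V))
termination_by D.sup (fun x => γ x + 1)
decreasing_by
  push_neg at h
  obtain ⟨x₀, hx₀, -⟩ := h
  have hle : γ x₀ + 1 ≤ D.sup (fun x => γ x + 1) :=
    Finset.le_sup (f := fun x => γ x + 1) hx₀
  have hpos : 0 < D.sup (fun x => γ x + 1) := lt_of_lt_of_le (Nat.succ_pos _) hle
  rw [Finset.sup_lt_iff hpos]
  intro y hy
  obtain ⟨x, hx, hyx⟩ := Finset.mem_biUnion.mp hy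
  have hle' : γ x + 1 ≤ D.sup (fun z => γ z + 1) :=
    Finset.le_sup (f := fun z => γ z + 1) hx
  have := hγ x y hyx
  omega

/-- `R_m f`: if `P` holds on all of `D_f`, the constant map `e` on `D_f`;
otherwise `G_m f (R_m (next f))`.  (Note that `R_m (next V f) = RmAux … (next V f).dom`.) -/
def Rm {α β σ : Type*} [DecidableEq α] (P : α → Prop) [DecidablePred P] (e : β)
    (F : Finset α → (α → β) → σ) (G : α → σ → β) (V : α → Finset α)
    (γ : α → ℕ) (hγ : ∀ x, ∀ y ∈ V x, γ y < γ x) (f : FMap α (Finset α)) : FMap α β :=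
  if ∀ x ∈ f.dom, P x then ⟨f.dom, fun _ => e⟩
  else FMap.Gm P e F G f (RmAux P e F G V γ hγ ((FMap.next V f).dom))

/-!
Unfolding `R_m f` gives the layers `D_f`, `next f`, `next (next f)`, …, each containing the
`V`-neighbourhoods of the points of the previous one, and the last consisting of points where `P`
holds. Going back from the last layer (induction along the recursion of `RmAux`), the values agree
with `R` on every layer: where `P` holds both are `e`; elsewhere `G_m` applies `F` to `V x`, which
lies in the next layer, so by locality of `F` the value is that of the defining equation of `R`.
-/

section

variable {α β σ : Type*} {P : α → Prop} [DecidablePred P] {e : β}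
  {F : Finset α → (α → β) → σ} {G : α → σ → β} {V : α → Finset α} {R : α → β}

theorem eqOn_const_of_forall
    (hR : ∀ x, R x = if P x then e else G x (F (V x) R)) {D : Finset α}
    (hP : ∀ x ∈ D, P x) : Set.EqOn (fun _ => e) R D := fun x hx => by
  rw [hR x, if_pos (hP x hx)]

variable [DecidableEq α]

theorem FMap.eqOn_Gm
    (hF : ∀ (S : Finset α) (h h' : α → β), (∀ x ∈ S, h x = h' x) → F S h = F S h')
    (hR : ∀ x, R x = if P x then e else G x (F (V x) R))
    {f : FMap α (Finset α)} {m : FMap α β} (hf : Set.EqOn f.toFun V f.dom)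
    (hnext : (FMap.next V f).dom ⊆ m.dom) (hm : Set.EqOn m.toFun R m.dom) :
    Set.EqOn (FMap.Gm P e F G f m).toFun R (FMap.Gm P e F G f m).dom := by
  intro x hx
  simp only [FMap.Gm, Finset.coe_union, Set.mem_union, Finset.mem_coe] at hx ⊢
  by_cases hxm : x ∈ m.dom
  · rw [if_pos hxm, hm hxm]
  have hxf : x ∈ f.dom := hx.resolve_right hxm
  rw [if_neg hxm, hR x]
  split_ifs
  · rfl
  rw [hf hxf]
  refine congrArg _ (hF _ _ _ fun y hy => hm (hnext ?_))
  exact Finset.mem_biUnion.mpr ⟨x, hxf, hf hxf ▸ hy⟩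

variable (P e F G) in
theorem subset_RmAux_dom (γ : α → ℕ) (hγ : ∀ x, ∀ y ∈ V x, γ y < γ x) (D : Finset α) :
    D ⊆ (RmAux P e F G V γ hγ D).dom := by
  rw [RmAux]
  split
  · exact subset_rfl
  · exact Finset.subset_union_left

theorem eqOn_RmAux
    (hF : ∀ (S : Finset α) (h h' : α → β), (∀ x ∈ S, h x = h' x) → F S h = F S h')
    (hR : ∀ x, R x = if P x then e else G x (F (V x) R))
    (γ : α → ℕ) (hγ : ∀ x, ∀ y ∈ V x, γ y < γ x) (D : Finset α) :
    Set.EqOn (RmAux P e F G V γ hγ D).toFun R (RmAux P e F G V γ hγ D).dom := by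
  fun_induction RmAux P e F G V γ hγ D with
  | case1 D hP => exact eqOn_const_of_forall hR hP
  | case2 D _ ih =>
    exact FMap.eqOn_Gm hF hR (Set.eqOn_refl _ _) (subset_RmAux_dom P e F G γ hγ _) ih

end

/-- **Theorem 1.** Let `R : α → β` be the function defined by well-founded
recursion on `γ` via `R x = if P x then e else G x (F (V x) R)` (here given together with
its defining equation `hR`).  Let `f` be a map from a finite domain `D_f` into `Finset α`
such that `f v = V v` for every `v ∈ D_f`, and let `g = R_m f`.  Then for every `x` in the
domain of `g`, `g x = R x`. -/
theorem Rm_eq_R_on_dom {α β σ : Type*} [DecidableEq α]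
    (P : α → Prop) [DecidablePred P] (e : β)
    (V : α → Finset α) (γ : α → ℕ)
    (hγ : ∀ x, ∀ y ∈ V x, γ y < γ x)
    (F : Finset α → (α → β) → σ)
    (hF : ∀ (S : Finset α) (h h' : α → β), (∀ x ∈ S, h x = h' x) → F S h = F S h')
    (G : α → σ → β)
    (R : α → β)
    (hR : ∀ x, R x = if P x then e else G x (F (V x) R))
    (f : FMap α (Finset α))
    (hf : ∀ v ∈ f.dom, f.toFun v = V v) :
    ∀ x ∈ (Rm P e F G V γ hγ f).dom,
      (Rm P e F G V γ hγ f).toFun x = R x := by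
  suffices h : Set.EqOn (Rm P e F G V γ hγ f).toFun R (Rm P e F G V γ hγ f).dom from
    fun x hx => h hx
  rw [Rm]
  split_ifs with hP
  · exact eqOn_const_of_forall hR hP
  · exact FMap.eqOn_Gm hF hR (fun v hv => hf v hv) (subset_RmAux_dom P e F G γ hγ _)
      (eqOn_RmAux hF hR γ hγ _)
end

section
/- If N ≥ n, then Stack x N equals the list [next^[n] x, next^[n-1] x, …, next x, x] of length n + 1; in particular, P holds of the head of Stack x N. -/
/-- One step of the iterated fold building the stack:
replace the current list `seq` by `seq` itself if `i > seq.length` or `P` holds of the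
head of `seq`, and by `(next (head of seq)) :: seq` otherwise. -/
def stackStep {α : Type*} [Inhabited α] (P : α → Prop) [DecidablePred P] (next : α → α)
    (seq : List α) (i : ℕ) : List α :=
  if i > seq.length ∨ P seq.headI then seq else next seq.headI :: seq

/-- `Stack x N`: starting from the one-element list `[x]`, apply `stackStep` for
`i = 1, …, N` in order. -/
def Stack {α : Type*} [Inhabited α] (P : α → Prop) [DecidablePred P] (next : α → α)
    (x : α) (N : ℕ) : List α :=
  (List.range' 1 N).foldl (stackStep P next) [x]

/-- Suppose `P (next^[n] x)` holds and `P (next^[i] x)` fails for every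
`i < n`.  If `N ≥ n`, then `Stack x N` equals the list
`[next^[n] x, next^[n-1] x, …, next x, x]` of length `n + 1`; in particular, `P` holds of
the head of `Stack x N`. -/
theorem stack_eq_of_le {α : Type*} [Inhabited α]
    (P : α → Prop) [DecidablePred P] (next : α → α) (x : α) (n : ℕ)
    (hn : P (next^[n] x))
    (hlt : ∀ i < n, ¬ P (next^[i] x))
    (N : ℕ) (hN : N ≥ n) :
    Stack P next x N = ((List.range (n + 1)).map fun i => next^[i] x).reverse ∧
      P (Stack P next x N).headI := by
  have hrev : ∀ k : ℕ, ((List.range (k + 1)).map fun i => next^[i] x).reverse =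
      next^[k] x :: ((List.range k).map fun i => next^[i] x).reverse := by
    intro k
    rw [List.range_succ, List.map_append, List.reverse_append]; rfl
  have hlen : ∀ k : ℕ, (((List.range (k + 1)).map fun i => next^[i] x).reverse).length
      = k + 1 := by
    intro k; simp
  have build : ∀ k : ℕ, k ≤ n →
      (List.range' 1 k).foldl (stackStep P next) [x] =
        ((List.range (k + 1)).map fun i => next^[i] x).reverse := by
    intro k
    induction k with
    | zero => intro _; simp
    | succ k ih =>
      intro hk
      have hk' : k ≤ n := Nat.le_of_succ_le hk
      rw [List.range'_concat, List.foldl_append, ih hk', List.foldl_cons,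
        List.foldl_nil]
      have hhead : (((List.range (k + 1)).map fun i => next^[i] x).reverse).headI
          = next^[k] x := by rw [hrev]; rfl
      rw [stackStep, if_neg, hhead, hrev (k + 1), hrev k]
      · rw [Function.iterate_succ_apply']
      · rw [hhead, hlen]
        push_neg
        exact ⟨by omega, hlt k (by omega)⟩
  have hstop : ∀ (l : List ℕ) (L : List α), P L.headI →
      l.foldl (stackStep P next) L = L := by
    intro l
    induction l with
    | nil => intro L _; rfl
    | cons a l ih =>
      intro L hL
      rw [List.foldl_cons, stackStep, if_pos (Or.inr hL)]
      exact ih L hL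
  have hsplit : List.range' 1 N = List.range' 1 n ++ List.range' (1 + n) (N - n) := by
    have h := @List.range'_append_1 1 n (N - n)
    rw [Nat.add_comm 1 n] at h ⊢
    rw [h]
    congr 1
    omega
  have hheadn : (((List.range (n + 1)).map fun i => next^[i] x).reverse).headI
      = next^[n] x := by rw [hrev]; rfl
  have key : Stack P next x N = ((List.range (n + 1)).map fun i => next^[i] x).reverse := by
    rw [Stack, hsplit, List.foldl_append, build n le_rfl]
    exact hstop _ _ (by rw [hheadn]; exact hn)
  exact ⟨key, by rw [key, hheadn]; exact hn⟩
end

section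
/- If N ≥ n, then I x N = G x (G (next x) (⋯ (G (next^[n-1] x) e) ⋯)); equivalently, I x N = r 0, where r : ℕ → b is defined downward by r j = e for j ≥ n and r j = G (next^[j] x) (r (j + 1)) for j < n. In particular, I x N equals the value at x of the bounded recursion R y = if P y then e else G y (R (next y)). -/
/-- `I x N`: the left fold over the tail of `Stack x N` with initial value `e` and
step `(cumul, v) ↦ G v cumul`. -/
def Ifold {α β : Type*} [Inhabited α] (P : α → Prop) [DecidablePred P] (next : α → α)
    (G : α → β → β) (e : β) (x : α) (N : ℕ) : β :=
  ((Stack P next x N).tail).foldl (fun cumul v => G v cumul) e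

/-- `r : ℕ → β` defined downward by `r j = e` for `j ≥ n` and
`r j = G (next^[j] x) (r (j + 1))` for `j < n`. -/
def rDown {α β : Type*} (G : α → β → β) (e : β) (next : α → α) (x : α) (n : ℕ) :
    ℕ → β := fun j =>
  if j < n then G (next^[j] x) (rDown G e next x n (j + 1)) else e
termination_by j => n - j

/-
While `P` fails along the orbit, each step of the fold pushes the next orbit point, so after
`k ≤ n` steps the stack is `[next^[k] x, …, next x, x]`; once `P (next^[n] x)` holds the stack
is frozen. Folding `G` over the tail of the final stack then unrolls `rDown` from `n` down to `0`,
and any solution of the bounded recursion agrees with `rDown` along the orbit by downward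
induction.
-/

def revOrbit {α : Type*} (next : α → α) (x : α) : ℕ → List α
  | 0 => []
  | k + 1 => next^[k] x :: revOrbit next x k

@[simp]
lemma length_revOrbit {α : Type*} (next : α → α) (x : α) (k : ℕ) :
    (revOrbit next x k).length = k := by
  induction k with
  | zero => rfl
  | succ k ih => simp [revOrbit, ih]

section Stack

variable {α : Type*} [Inhabited α] (P : α → Prop) [DecidablePred P] (next : α → α) (x : α)

lemma Stack_succ (k : ℕ) :
    Stack P next x (k + 1) = stackStep P next (Stack P next x k) (k + 1) := by
  rw [Stack, List.range'_concat, List.foldl_append, Nat.one_mul, Nat.add_comm 1 k]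
  rfl

variable {n : ℕ} (hlt : ∀ i < n, ¬ P (next^[i] x))
include hlt

lemma Stack_of_le {k : ℕ} (hk : k ≤ n) :
    Stack P next x k = next^[k] x :: revOrbit next x k := by
  induction k with
  | zero => rfl
  | succ k ih =>
    rw [Stack_succ, ih (by omega), stackStep, if_neg (by simp [hlt k (by omega)]),
      List.headI_cons, ← Function.iterate_succ_apply' next k x]
    rfl

lemma Stack_of_ge (hn : P (next^[n] x)) {N : ℕ} (hN : n ≤ N) :
    Stack P next x N = next^[n] x :: revOrbit next x n := by
  induction N, hN using Nat.le_induction with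
  | base => exact Stack_of_le P next x hlt le_rfl
  | succ N _ ih => rw [Stack_succ, ih, stackStep, List.headI_cons, if_pos (Or.inr hn)]

end Stack

section rDown

variable {α β : Type*} (G : α → β → β) (e : β) (next : α → α) (x : α) (n : ℕ)

lemma rDown_of_lt {j : ℕ} (hj : j < n) :
    rDown G e next x n j = G (next^[j] x) (rDown G e next x n (j + 1)) := by
  rw [rDown, if_pos hj]

lemma rDown_of_le {j : ℕ} (hj : n ≤ j) : rDown G e next x n j = e := by
  rw [rDown, if_neg (by omega)]

lemma foldl_revOrbit_rDown {k : ℕ} (hk : k ≤ n) :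
    (revOrbit next x k).foldl (fun cumul v => G v cumul) (rDown G e next x n k) =
      rDown G e next x n 0 := by
  induction k with
  | zero => rfl
  | succ k ih =>
    rw [revOrbit, List.foldl_cons, ← rDown_of_lt G e next x n (by omega), ih (by omega)]

lemma apply_iterate_eq_rDown {P : α → Prop} [DecidablePred P] (hn : P (next^[n] x))
    (hlt : ∀ i < n, ¬ P (next^[i] x))
    {R : α → β} (hR : ∀ y, R y = if P y then e else G y (R (next y))) {j : ℕ} (hj : j ≤ n) :
    R (next^[j] x) = rDown G e next x n j := by
  fun_induction rDown G e next x n j with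
  | case1 j hjn ih =>
    rw [hR, if_neg (hlt j hjn), ← ih (by omega), Function.iterate_succ_apply']
  | case2 j hjn =>
    obtain rfl : j = n := by omega
    rw [hR, if_pos hn]

end rDown

/-- Suppose `P (next^[n] x)` holds and `P (next^[i] x)` fails for every
`i < n`.  If `N ≥ n`, then `I x N = G x (G (next x) (⋯ (G (next^[n-1] x) e) ⋯))`;
equivalently, `I x N = r 0` where `r` is defined downward as in `rDown`.  In particular,
`I x N` equals the value at `x` of (any function `R` satisfying) the bounded recursion
`R y = if P y then e else G y (R (next y))`. -/
theorem Ifold_eq_rDown {α β : Type*} [Inhabited α]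
    (P : α → Prop) [DecidablePred P] (next : α → α) (G : α → β → β) (e : β)
    (x : α) (n : ℕ)
    (hn : P (next^[n] x))
    (hlt : ∀ i < n, ¬ P (next^[i] x))
    (N : ℕ) (hN : N ≥ n) :
    Ifold P next G e x N = rDown G e next x n 0 ∧
      ∀ R : α → β, (∀ y, R y = if P y then e else G y (R (next y))) →
        Ifold P next G e x N = R x := by
  have hI : Ifold P next G e x N = rDown G e next x n 0 := by
    have hfold := foldl_revOrbit_rDown G e next x n le_rfl
    rw [rDown_of_le G e next x n le_rfl] at hfold
    rw [Ifold, Stack_of_ge P next x hlt hn hN, List.tail_cons, hfold]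
  refine ⟨hI, fun R hR => ?_⟩
  rw [hI, ← apply_iterate_eq_rDown G e next x n hn hlt hR (Nat.zero_le n)]
  rfl
end
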